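/- Assume each f_m^j : ℝ^d → ℝ is L-smooth and convex, and f = (1/(MN)) Σ_m Σ_j f_m^j is μ-strongly convex with minimizer x_⋆. Then for any θ > 0, the meta-epoch average gradient of Algorithm RR-CLI satisfies −2θ ⟨(1/R) Σ_{r=0}^{R−1} (1/C) Σ_{m ∈ S_t^{λ_r}} (1/N) Σ_{j=0}^{N−1} ∇f_m^{π_j}(x_{m,t}^{r,j}), x_t − x_⋆⟩ ≤ −(θμ/2) ‖x_t − x_⋆‖² − θ (f(x_t) − f(x_⋆)) + θL V_t, where V_t = (1/(RCN)) Σ_{r=0}^{R−1} Σ_{m ∈ S_t^{λ_r}} Σ_{j=0}^{N−1} ‖x_t − x_{m,t}^{r,j}‖². -/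

import Mathlib

open Finset RealInnerProductSpace

noncomputable section

/-- Points in `ℝ^d`. -/
abbrev Vec (d : ℕ) := EuclideanSpace ℝ (Fin d)

/-- The index (in `[M]`) of the `c`-th slot of cohort `r`, when the `M = C·R` clients are
partitioned into `R` cohorts of size `C`. -/
def cohortIdx {M C R : ℕ} (hM : M = C * R) (r : Fin R) (c : Fin C) : Fin M :=
  ⟨(r : ℕ) * C + (c : ℕ), by
    have h1 : (r : ℕ) * C + (c : ℕ) < ((r : ℕ) + 1) * C := by
      calc (r : ℕ) * C + (c : ℕ) < (r : ℕ) * C + C := Nat.add_lt_add_left c.isLt _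
        _ = ((r : ℕ) + 1) * C := by ring
    have h2 : ((r : ℕ) + 1) * C ≤ R * C := Nat.mul_le_mul (Nat.succ_le_of_lt r.isLt) (le_refl C)
    have h3 : R * C = M := by rw [hM, Nat.mul_comm]
    exact h1.trans_le (h2.trans_eq h3)⟩

/-- The global objective `f = (1/(MN)) Σ_m Σ_j f_m^j`. -/
def fbar {d M N : ℕ} (f : Fin M → Fin N → Vec d → ℝ) : Vec d → ℝ :=
  fun x => ((M : ℝ) * (N : ℝ))⁻¹ * ∑ m, ∑ j, f m j x

lemma line_hasDerivAt {d : ℕ} (a b : Vec d) (t : ℝ) :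
    HasDerivAt (fun t : ℝ => a + t • (b - a)) (b - a) t := by
  simpa using ((hasDerivAt_id t).smul_const (b - a)).const_add a

lemma comp_line_hasDerivAt {d : ℕ} (h : Vec d → ℝ) (hdiff : Differentiable ℝ h)
    (a b : Vec d) (t : ℝ) :
    HasDerivAt (fun t : ℝ => h (a + t • (b - a)))
      ⟪gradient h (a + t • (b - a)), b - a⟫ t := by
  have h1 : HasGradientAt h (gradient h (a + t • (b - a))) (a + t • (b - a)) :=
    (hdiff _).hasGradientAt
  have h2 := (hasGradientAt_iff_hasFDerivAt.1 h1).comp_hasDerivAt t (line_hasDerivAt a b t)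
  simpa [InnerProductSpace.toDual_apply_apply, Function.comp_def] using h2

lemma inner_gradient_le_sub {d : ℕ} (h : Vec d → ℝ) (hdiff : Differentiable ℝ h)
    (hconv : ConvexOn ℝ Set.univ h) (a b : Vec d) :
    ⟪gradient h a, b - a⟫ ≤ h b - h a := by
  have hgc : ConvexOn ℝ Set.univ (fun t : ℝ => h (a + t • (b - a))) := by
    have := hconv.comp_affineMap (AffineMap.lineMap a b)
    have heq : (h ∘ (AffineMap.lineMap a b)) = fun t : ℝ => h (a + t • (b - a)) := by
      funext t
      simp [AffineMap.lineMap_apply, add_comm]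
    rw [heq] at this
    simpa using this
  have := hgc.le_slope_of_hasDerivAt (Set.mem_univ (0:ℝ)) (Set.mem_univ (1:ℝ)) one_pos
    (comp_line_hasDerivAt h hdiff a b 0)
  rw [slope_def_field] at this
  simpa using this

lemma descent_lemma {d : ℕ} {L : ℝ} (hL : 0 ≤ L) (h : Vec d → ℝ)
    (hdiff : Differentiable ℝ h)
    (hlip : ∀ x y, ‖gradient h x - gradient h y‖ ≤ L * ‖x - y‖) (a b : Vec d) :
    h b ≤ h a + ⟪gradient h a, b - a⟫ + L / 2 * ‖b - a‖ ^ 2 := by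
  set w : Vec d := b - a with hw
  have hGcont : Continuous fun t : ℝ => gradient h (a + t • w) := by
    have hlipG : LipschitzWith (Real.toNNReal (L * ‖w‖))
        (fun t : ℝ => gradient h (a + t • w)) := by
      apply LipschitzWith.of_dist_le_mul
      intro s t
      simp only [dist_eq_norm]
      calc ‖gradient h (a + s • w) - gradient h (a + t • w)‖
          ≤ L * ‖(a + s • w) - (a + t • w)‖ := hlip _ _
        _ = L * ‖w‖ * |s - t| := by
            rw [show (a + s • w) - (a + t • w) = (s - t) • w by module]
            rw [norm_smul, Real.norm_eq_abs]; ring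
        _ ≤ Real.toNNReal (L * ‖w‖) * |s - t| := by
            gcongr
            exact Real.le_coe_toNNReal _
    exact hlipG.continuous
  have hg' : Continuous fun t : ℝ => (⟪gradient h (a + t • w), w⟫ : ℝ) :=
    hGcont.inner continuous_const
  have hFTC : ∫ t in (0:ℝ)..1, (⟪gradient h (a + t • w), w⟫ : ℝ) = h b - h a := by
    have := intervalIntegral.integral_eq_sub_of_hasDerivAt
      (f := fun t : ℝ => h (a + t • w))
      (f' := fun t : ℝ => (⟪gradient h (a + t • w), w⟫ : ℝ))
      (fun t _ => comp_line_hasDerivAt h hdiff a b t)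
      (hg'.intervalIntegrable 0 1)
    have e1 : a + (1:ℝ) • w = b := by rw [hw]; module
    have e0 : a + (0:ℝ) • w = a := by simp
    rw [e1, e0] at this
    exact this
  have hbound : ∀ t ∈ Set.Icc (0:ℝ) 1,
      (⟪gradient h (a + t • w), w⟫ : ℝ) ≤ ⟪gradient h a, w⟫ + (L * ‖w‖ ^ 2) * t := by
    intro t ht
    have h1 : (⟪gradient h (a + t • w), w⟫ : ℝ) - ⟪gradient h a, w⟫
        = ⟪gradient h (a + t • w) - gradient h a, w⟫ := by
      rw [inner_sub_left]
    have h2 : (⟪gradient h (a + t • w) - gradient h a, w⟫ : ℝ)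
        ≤ ‖gradient h (a + t • w) - gradient h a‖ * ‖w‖ := real_inner_le_norm _ _
    have h3 : ‖gradient h (a + t • w) - gradient h a‖ ≤ L * (t * ‖w‖) := by
      have := hlip (a + t • w) a
      simpa [norm_smul, abs_of_nonneg ht.1] using this
    nlinarith [norm_nonneg w, ht.1]
  have hint : ∫ t in (0:ℝ)..1, ((⟪gradient h a, w⟫ : ℝ) + (L * ‖w‖ ^ 2) * t)
      = ⟪gradient h a, w⟫ + L / 2 * ‖w‖ ^ 2 := by
    rw [intervalIntegral.integral_add intervalIntegrable_const
      (((by fun_prop : Continuous fun t : ℝ => (L * ‖w‖ ^ 2) * t)).intervalIntegrable 0 1),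
      intervalIntegral.integral_const, intervalIntegral.integral_const_mul]
    simp [integral_id]
    ring
  have hmono : ∫ t in (0:ℝ)..1, (⟪gradient h (a + t • w), w⟫ : ℝ)
      ≤ ∫ t in (0:ℝ)..1, ((⟪gradient h a, w⟫ : ℝ) + (L * ‖w‖ ^ 2) * t) := by
    apply intervalIntegral.integral_mono_on zero_le_one
      (hg'.intervalIntegrable 0 1)
      (((by fun_prop : Continuous fun t : ℝ => (⟪gradient h a, w⟫ : ℝ) + (L * ‖w‖ ^ 2) * t)).intervalIntegrable 0 1)
    intro t ht
    exact hbound t ht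
  rw [hFTC, hint] at hmono
  linarith


lemma sum_cohort {M C R : ℕ} (hM : M = C * R) (ρ : Equiv.Perm (Fin M)) (F : Fin M → ℝ) :
    ∑ r : Fin R, ∑ c : Fin C, F (ρ (cohortIdx hM r c)) = ∑ m : Fin M, F m := by
  rw [← Fintype.sum_prod_type']
  apply Fintype.sum_bijective (fun p : Fin R × Fin C => ρ (cohortIdx hM p.1 p.2))
    ?_ _ _ (fun p => rfl)
  refine (Fintype.bijective_iff_injective_and_card _).2 ⟨?_, by simp [hM, Nat.mul_comm]⟩
  intro p q hpq
  have h1 : cohortIdx hM p.1 p.2 = cohortIdx hM q.1 q.2 := ρ.injective hpq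
  have h2 : (p.1 : ℕ) * C + (p.2 : ℕ) = (q.1 : ℕ) * C + (q.2 : ℕ) := congrArg Fin.val h1
  have hC0 : 0 < C := p.2.pos
  have ediv : ∀ (r : Fin R) (c : Fin C), ((r : ℕ) * C + (c : ℕ)) / C = (r : ℕ) := by
    intro r c
    rw [Nat.mul_comm, Nat.mul_add_div hC0, Nat.div_eq_of_lt c.isLt, Nat.add_zero]
  have hr : (p.1 : ℕ) = (q.1 : ℕ) := by
    have := congrArg (· / C) h2
    simpa [ediv] using this
  have hc : (p.2 : ℕ) = (q.2 : ℕ) := by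
    rw [hr] at h2; omega
  exact Prod.ext (Fin.ext hr) (Fin.ext hc)


/-- If each `f_m^j` is convex and `L`-smooth and `f` is `μ`-strongly
convex with minimizer `x_⋆`, then for any `θ > 0` the meta-epoch average gradient of
`RR-CLI` satisfies
`−2θ ⟨(1/R) Σ_r (1/C) Σ_{m ∈ S_t^{λ_r}} (1/N) Σ_j ∇f_m^{π_j}(x_{m,t}^{r,j}), x_t − x_⋆⟩
  ≤ −(θμ/2) ‖x_t − x_⋆‖² − θ (f(x_t) − f(x_⋆)) + θL V_t`, where
`V_t = (1/(RCN)) Σ_r Σ_{m ∈ S_t^{λ_r}} Σ_j ‖x_t − x_{m,t}^{r,j}‖²`. -/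
theorem statement16 (d M N C R : ℕ) (hM : M = C * R) (hC : 0 < C) (hN : 0 < N)
    (hR : 0 < R)
    (μ L : ℝ) (hμ : 0 < μ) (hL : 0 < L)
    (f : Fin M → Fin N → Vec d → ℝ)
    (hdiff : ∀ m j, Differentiable ℝ (f m j))
    (hconv : ∀ m j, ConvexOn ℝ Set.univ (f m j))
    (hsmooth : ∀ m j x y, ‖gradient (f m j) x - gradient (f m j) y‖ ≤ L * ‖x - y‖)
    (hsc : ∀ x y,
      ⟪gradient (fbar f) x, y - x⟫ ≤
        -(fbar f x - fbar f y + μ / 2 * ‖x - y‖ ^ 2))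
    (γ η θ : ℝ) (hγ0 : 0 < γ) (hη0 : 0 < η) (hθ0 : 0 < θ)
    (xs xt : Vec d) (hmin : ∀ x, fbar f xs ≤ fbar f x)
    (ρ : Equiv.Perm (Fin M)) (πd : Fin M → Equiv.Perm (Fin N))
    -- the iterates of one meta epoch of Algorithm RR-CLI, started at `xt`
    (Xr : ℕ → Vec d) (Xl : ℕ → Fin M → ℕ → Vec d)
    (hX0 : Xr 0 = xt)
    (hlinit : ∀ r m, Xl r m 0 = Xr r)
    (hlstep : ∀ r m (j : ℕ) (hj : j < N),
      Xl r m (j + 1) = Xl r m j - γ • gradient (f m (πd m ⟨j, hj⟩)) (Xl r m j))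
    (hrstep : ∀ (r : Fin R),
      Xr ((r : ℕ) + 1) =
        Xr r -
          η • ((C : ℝ)⁻¹ • ∑ c : Fin C,
            (γ * (N : ℝ))⁻¹ •
              (Xr r - Xl r (ρ (cohortIdx hM r c)) N))) :
    -2 * θ *
        ⟪(R : ℝ)⁻¹ • ∑ r : Fin R, (C : ℝ)⁻¹ • ∑ c : Fin C,
            (N : ℝ)⁻¹ • ∑ j : Fin N,
              gradient (f (ρ (cohortIdx hM r c)) (πd (ρ (cohortIdx hM r c)) j))
                (Xl r (ρ (cohortIdx hM r c)) (j : ℕ)),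
          xt - xs⟫
      ≤ -(θ * μ / 2) * ‖xt - xs‖ ^ 2 - θ * (fbar f xt - fbar f xs)
        + θ * L *
          (((R : ℝ) * (C : ℝ) * (N : ℝ))⁻¹ *
            ∑ r : Fin R, ∑ c : Fin C, ∑ j : Fin N,
              ‖xt - Xl r (ρ (cohortIdx hM r c)) (j : ℕ)‖ ^ 2) := by
  have hM0 : 0 < M := by rw [hM]; exact Nat.mul_pos hC hR
  have hRpos : (0:ℝ) < (R:ℝ) := by exact_mod_cast hR
  have hCpos : (0:ℝ) < (C:ℝ) := by exact_mod_cast hC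
  have hNpos : (0:ℝ) < (N:ℝ) := by exact_mod_cast hN
  have hMpos : (0:ℝ) < (M:ℝ) := by exact_mod_cast hM0
  have hMR : (M:ℝ) = (C:ℝ) * (R:ℝ) := by exact_mod_cast congrArg (Nat.cast : ℕ → ℝ) hM
  -- strong convexity at the minimizer
  have hfbd : Differentiable ℝ (fbar f) := by
    unfold fbar
    exact Differentiable.const_mul
      (Differentiable.fun_sum fun m _ => Differentiable.fun_sum fun j _ => hdiff m j) _
  have hgrad0 : gradient (fbar f) xs = 0 := by
    have hloc : IsLocalMin (fbar f) xs := Filter.Eventually.of_forall hmin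
    have hfd0 : fderiv ℝ (fbar f) xs = 0 := hloc.fderiv_eq_zero
    simp [gradient, hfd0]
  have hΔ : μ / 2 * ‖xt - xs‖ ^ 2 ≤ fbar f xt - fbar f xs := by
    have h1 := hsc xs xt
    rw [hgrad0] at h1
    simp only [inner_zero_left] at h1
    rw [norm_sub_rev] at h1
    linarith
  -- per-term bound
  have key : ∀ (r : Fin R) (c : Fin C) (j : Fin N),
      f (ρ (cohortIdx hM r c)) (πd (ρ (cohortIdx hM r c)) j) xt
          - f (ρ (cohortIdx hM r c)) (πd (ρ (cohortIdx hM r c)) j) xs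
          - L / 2 * ‖xt - Xl r (ρ (cohortIdx hM r c)) (j : ℕ)‖ ^ 2
        ≤ ⟪gradient (f (ρ (cohortIdx hM r c)) (πd (ρ (cohortIdx hM r c)) j))
            (Xl r (ρ (cohortIdx hM r c)) (j : ℕ)), xt - xs⟫ := by
    intro r c j
    set m := ρ (cohortIdx hM r c) with hm
    set k := πd m j with hk
    set y := Xl r m (j : ℕ) with hy
    have hdec : (⟪gradient (f m k) y, xt - xs⟫ : ℝ)
        = ⟪gradient (f m k) y, xt - y⟫ + ⟪gradient (f m k) y, y - xs⟫ := by
      rw [← inner_add_right]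
      congr 1
      abel
    have h1 : f m k xt - f m k y - L / 2 * ‖xt - y‖ ^ 2
        ≤ ⟪gradient (f m k) y, xt - y⟫ := by
      have := descent_lemma hL.le (f m k) (hdiff m k) (hsmooth m k) y xt
      linarith
    have h2 : f m k y - f m k xs ≤ ⟪gradient (f m k) y, y - xs⟫ := by
      have h3 := inner_gradient_le_sub (f m k) (hdiff m k) (hconv m k) y xs
      have hneg : (⟪gradient (f m k) y, y - xs⟫ : ℝ)
          = -⟪gradient (f m k) y, xs - y⟫ := by
        rw [← inner_neg_right]
        congr 1
        abel
      rw [hneg]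
      linarith
    rw [hdec]
    linarith
  -- rewrite the inner product as a scaled triple sum
  set ip : Fin R → Fin C → Fin N → ℝ := fun r c j =>
    ⟪gradient (f (ρ (cohortIdx hM r c)) (πd (ρ (cohortIdx hM r c)) j))
        (Xl r (ρ (cohortIdx hM r c)) (j : ℕ)), xt - xs⟫ with hip
  have hIP : (⟪(R : ℝ)⁻¹ • ∑ r : Fin R, (C : ℝ)⁻¹ • ∑ c : Fin C,
            (N : ℝ)⁻¹ • ∑ j : Fin N,
              gradient (f (ρ (cohortIdx hM r c)) (πd (ρ (cohortIdx hM r c)) j))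
                (Xl r (ρ (cohortIdx hM r c)) (j : ℕ)),
          xt - xs⟫ : ℝ)
      = ((R : ℝ) * (C : ℝ) * (N : ℝ))⁻¹ * ∑ r, ∑ c, ∑ j, ip r c j := by
    simp only [sum_inner, real_inner_smul_left, Finset.mul_sum, hip]
    refine Finset.sum_congr rfl fun r _ => Finset.sum_congr rfl fun c _ =>
      Finset.sum_congr rfl fun j _ => by ring
  -- sum of the per-term bounds
  set W : ℝ := ∑ r : Fin R, ∑ c : Fin C, ∑ j : Fin N,
      ‖xt - Xl r (ρ (cohortIdx hM r c)) (j : ℕ)‖ ^ 2 with hW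
  have hsum1 : (M : ℝ) * (N : ℝ) * (fbar f xt - fbar f xs) - L / 2 * W
      ≤ ∑ r, ∑ c, ∑ j, ip r c j := by
    have hle : ∑ r : Fin R, ∑ c : Fin C, ∑ j : Fin N,
        (f (ρ (cohortIdx hM r c)) (πd (ρ (cohortIdx hM r c)) j) xt
          - f (ρ (cohortIdx hM r c)) (πd (ρ (cohortIdx hM r c)) j) xs
          - L / 2 * ‖xt - Xl r (ρ (cohortIdx hM r c)) (j : ℕ)‖ ^ 2)
        ≤ ∑ r, ∑ c, ∑ j, ip r c j := by
      refine Finset.sum_le_sum fun r _ => Finset.sum_le_sum fun c _ =>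
        Finset.sum_le_sum fun j _ => key r c j
    have hsplit : ∑ r : Fin R, ∑ c : Fin C, ∑ j : Fin N,
        (f (ρ (cohortIdx hM r c)) (πd (ρ (cohortIdx hM r c)) j) xt
          - f (ρ (cohortIdx hM r c)) (πd (ρ (cohortIdx hM r c)) j) xs
          - L / 2 * ‖xt - Xl r (ρ (cohortIdx hM r c)) (j : ℕ)‖ ^ 2)
        = (∑ r : Fin R, ∑ c : Fin C, ∑ j : Fin N,
            (f (ρ (cohortIdx hM r c)) (πd (ρ (cohortIdx hM r c)) j) xt
              - f (ρ (cohortIdx hM r c)) (πd (ρ (cohortIdx hM r c)) j) xs))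
          - L / 2 * W := by
      rw [hW]
      simp only [Finset.sum_sub_distrib, Finset.mul_sum]
    have hperm : ∀ (r : Fin R) (c : Fin C), ∑ j : Fin N,
        (f (ρ (cohortIdx hM r c)) (πd (ρ (cohortIdx hM r c)) j) xt
          - f (ρ (cohortIdx hM r c)) (πd (ρ (cohortIdx hM r c)) j) xs)
        = ∑ j : Fin N,
            (f (ρ (cohortIdx hM r c)) j xt - f (ρ (cohortIdx hM r c)) j xs) := by
      intro r c
      exact Equiv.sum_comp (πd (ρ (cohortIdx hM r c)))
        (fun j => f (ρ (cohortIdx hM r c)) j xt - f (ρ (cohortIdx hM r c)) j xs)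
    have hT : ∑ r : Fin R, ∑ c : Fin C, ∑ j : Fin N,
        (f (ρ (cohortIdx hM r c)) (πd (ρ (cohortIdx hM r c)) j) xt
          - f (ρ (cohortIdx hM r c)) (πd (ρ (cohortIdx hM r c)) j) xs)
        = (M : ℝ) * (N : ℝ) * (fbar f xt - fbar f xs) := by
      calc ∑ r : Fin R, ∑ c : Fin C, ∑ j : Fin N,
            (f (ρ (cohortIdx hM r c)) (πd (ρ (cohortIdx hM r c)) j) xt
              - f (ρ (cohortIdx hM r c)) (πd (ρ (cohortIdx hM r c)) j) xs)
          = ∑ r : Fin R, ∑ c : Fin C, ∑ j : Fin N,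
              (f (ρ (cohortIdx hM r c)) j xt - f (ρ (cohortIdx hM r c)) j xs) := by
            exact Finset.sum_congr rfl fun r _ => Finset.sum_congr rfl fun c _ => hperm r c
        _ = ∑ m : Fin M, ∑ j : Fin N, (f m j xt - f m j xs) :=
            sum_cohort hM ρ (fun m => ∑ j : Fin N, (f m j xt - f m j xs))
        _ = (M : ℝ) * (N : ℝ) * (fbar f xt - fbar f xs) := by
            unfold fbar
            simp only [Finset.sum_sub_distrib]
            have hMN : (M:ℝ) * (N:ℝ) ≠ 0 := by positivity
            field_simp
    rw [hsplit, hT] at hle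
    linarith
  -- put everything together
  rw [hIP]
  have hcoef : ((R : ℝ) * (C : ℝ) * (N : ℝ))⁻¹ * ((M : ℝ) * (N : ℝ)) = 1 := by
    rw [hMR, show ((C:ℝ) * (R:ℝ)) * (N:ℝ) = (R:ℝ) * (C:ℝ) * (N:ℝ) by ring]
    exact inv_mul_cancel₀ (by positivity)
  have hres : fbar f xt - fbar f xs - L / 2 * (((R : ℝ) * (C : ℝ) * (N : ℝ))⁻¹ * W)
      ≤ ((R : ℝ) * (C : ℝ) * (N : ℝ))⁻¹ * ∑ r, ∑ c, ∑ j, ip r c j := by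
    have hpos : (0:ℝ) < (R : ℝ) * (C : ℝ) * (N : ℝ) := by positivity
    have := mul_le_mul_of_nonneg_left hsum1 (le_of_lt (inv_pos.2 hpos))
    calc fbar f xt - fbar f xs - L / 2 * (((R : ℝ) * (C : ℝ) * (N : ℝ))⁻¹ * W)
        = ((R : ℝ) * (C : ℝ) * (N : ℝ))⁻¹
            * ((M : ℝ) * (N : ℝ) * (fbar f xt - fbar f xs) - L / 2 * W) := by
          rw [mul_sub, ← mul_assoc, ← mul_assoc, hcoef]
          ring
      _ ≤ _ := this
  nlinarith [mul_le_mul_of_nonneg_left hres (by linarith : (0:ℝ) ≤ 2 * θ),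
    mul_le_mul_of_nonneg_left hΔ (le_of_lt hθ0)]

end
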